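/- arXiv:1611.00991 — 3 statements merged into one kernel-verified Lean document; each statement's English description precedes it below -/
import Mathlib

section
/- Let X and Y be real-valued random variables with E[X] = E[Y], finite second moments, and let t be a real number. Then |E[e^{itX}] - E[e^{itY}]| ≤ |t| · sqrt(Var[X - Y]). -/
open MeasureTheory ProbabilityTheory Complex

/- Proof idea: `x ↦ exp (x * I)` is 1-Lipschitz on `ℝ`, so
`‖E[e^{itX}] - E[e^{itY}]‖ ≤ E‖e^{itX} - e^{itY}‖ ≤ |t| E|X - Y|`, and since `X - Y` is centred,
Cauchy–Schwarz gives `E|X - Y| ≤ sqrt (E[(X - Y)²]) = sqrt (Var[X - Y])`. -/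

lemma norm_exp_ofReal_mul_I_sub_le (a b : ℝ) :
    ‖exp (a * I) - exp (b * I)‖ ≤ |a - b| := by
  have hfactor : exp (a * I) - exp (b * I) = exp (b * I) * (exp (I * ↑(a - b)) - 1) := by
    rw [mul_sub, mul_one, ← Complex.exp_add]
    push_cast
    ring_nf
  rw [hfactor, norm_mul, norm_exp_ofReal_mul_I, one_mul]
  exact Real.norm_exp_I_mul_ofReal_sub_one_le

section

variable {Ω : Type*} [MeasurableSpace Ω] {μ : Measure Ω}

lemma integrable_exp_ofReal_mul_I [IsFiniteMeasure μ] {X : Ω → ℝ}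
    (hX : AEStronglyMeasurable X μ) : Integrable (fun ω ↦ exp (X ω * I)) μ :=
  .of_bound (by fun_prop) 1 (.of_forall fun ω ↦ (norm_exp_ofReal_mul_I (X ω)).le)

lemma norm_integral_exp_sub_integral_exp_le [IsFiniteMeasure μ] {X Y : Ω → ℝ}
    (hX : AEStronglyMeasurable X μ) (hY : AEStronglyMeasurable Y μ)
    (hXY : Integrable (X - Y) μ) (t : ℝ) :
    ‖(∫ ω, exp (t * X ω * I) ∂μ) - ∫ ω, exp (t * Y ω * I) ∂μ‖
      ≤ |t| * ∫ ω, |X ω - Y ω| ∂μ := by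
  have hexp : ∀ Z : Ω → ℝ, AEStronglyMeasurable Z μ →
      Integrable (fun ω ↦ exp (t * Z ω * I)) μ := fun Z hZ ↦ by
    simpa only [ofReal_mul] using integrable_exp_ofReal_mul_I (hZ.const_mul t)
  rw [← integral_sub (hexp X hX) (hexp Y hY), ← integral_const_mul]
  refine (norm_integral_le_integral_norm _).trans <|
    integral_mono ((hexp X hX).sub (hexp Y hY)).norm (hXY.abs.const_mul _) fun ω ↦ ?_
  simpa only [← ofReal_mul, ← mul_sub, abs_mul] using
    norm_exp_ofReal_mul_I_sub_le (t * X ω) (t * Y ω)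

lemma sq_integral_abs_le_integral_sq [IsProbabilityMeasure μ] {Z : Ω → ℝ} (hZ : MemLp Z 2 μ) :
    (∫ ω, |Z ω| ∂μ) ^ 2 ≤ ∫ ω, Z ω ^ 2 ∂μ := by
  have hvar := variance_nonneg (fun ω ↦ |Z ω|) μ
  rw [variance_eq_sub (by simpa only [Real.norm_eq_abs] using hZ.norm)] at hvar
  simpa only [Pi.pow_apply, sq_abs, sub_nonneg] using hvar

lemma integral_abs_le_sqrt_variance [IsProbabilityMeasure μ] {Z : Ω → ℝ} (hZ : MemLp Z 2 μ)
    (hZ0 : μ[Z] = 0) : ∫ ω, |Z ω| ∂μ ≤ Real.sqrt (variance Z μ) := by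
  rw [variance_of_integral_eq_zero hZ.aemeasurable hZ0]
  exact Real.le_sqrt_of_sq_le (sq_integral_abs_le_integral_sq hZ)

end

/-- If `X` and `Y` are integrable real random variables with equal means and
`X - Y` square-integrable, then for any real `t`,
`|E[e^{itX}] - E[e^{itY}]| ≤ |t| · sqrt(Var[X - Y])`. -/
theorem stmt_0 {Ω : Type*} [MeasureSpace Ω] [IsProbabilityMeasure (ℙ : Measure Ω)]
    (X Y : Ω → ℝ) (hX : Integrable X) (hY : Integrable Y)
    (hE : ∫ ω, X ω = ∫ ω, Y ω)
    (h2 : MemLp (X - Y) 2 ℙ) (t : ℝ) :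
    ‖(∫ ω, Complex.exp (t * X ω * Complex.I)) -
        (∫ ω, Complex.exp (t * Y ω * Complex.I))‖
      ≤ |t| * Real.sqrt (variance (X - Y) ℙ) := by
  have hcentred : ∫ ω, (X - Y) ω = 0 := by
    rw [integral_sub' hX hY, hE, sub_self]
  calc _ ≤ |t| * ∫ ω, |(X - Y) ω| :=
        norm_integral_exp_sub_integral_exp_le hX.1 hY.1 (hX.sub hY) t
    _ ≤ |t| * Real.sqrt (variance (X - Y) ℙ) :=
        mul_le_mul_of_nonneg_left (integral_abs_le_sqrt_variance h2 hcentred) (abs_nonneg t)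
end

section
/- Let f : ℝ → ℝ be continuous with compact support and with F f continuous. Fix 0 < α < 1. Then (1/n^{1-α}) ∑_{k=-∞}^{∞} |F f(k / n^{1-α})|² → ∫_ℝ |F f(ξ)|² dξ as n → ∞, provided ∫_ℝ |F f(ξ)|²(1+|ξ|) dξ < ∞. -/
open MeasureTheory Real Complex Filter Topology

/-- The Fourier transform with normalization `F f(ω) = (1/2π) ∫ e^{-ixω} f(x) dx`. -/
noncomputable def fourierT (f : ℝ → ℝ) (ω : ℝ) : ℂ :=
  (1 / (2 * Real.pi)) * ∫ x : ℝ, Complex.exp (-(x * ω) * Complex.I) * (f x : ℂ)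

/-!
If `g` vanishes outside `[-R, R]` and `P > 2R`, then `𝓕 g (n / P) / P` is the `n`-th Fourier
coefficient of `g` viewed on the circle `ℝ / Pℤ`, so Parseval's identity makes the Riemann sum
`P⁻¹ ∑ₙ ‖𝓕 g (n / P)‖²` equal to `∫ ‖g‖²` exactly. Plancherel's theorem identifies this with
`∫ ‖𝓕 g‖²`. Hence the sequence in the theorem is eventually constant, equal to its limit.
-/

open FourierTransform ComplexConjugate Convolution Set

namespace Real

section Plancherel

variable {V : Type*} [NormedAddCommGroup V] [InnerProductSpace ℝ V] [FiniteDimensional ℝ V]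
  [MeasurableSpace V] [BorelSpace V]

theorem fourier_conj_comp_neg (g : V → ℂ) (w : V) :
    𝓕 (fun x ↦ conj (g (-x))) w = conj (𝓕 g w) := by
  rw [fourier_eq, fourier_eq, ← integral_conj, ← integral_neg_eq_self]
  congr 1 with v
  simp [Circle.smul_def, inner_neg_left, ← Circle.coe_inv_eq_conj, AddChar.map_neg_eq_inv]

theorem integral_norm_fourier_sq {g : V → ℂ} (hg : Continuous g) (hgs : HasCompactSupport g)
    (hFg : Integrable fun ξ ↦ ‖𝓕 g ξ‖ ^ 2) :
    ∫ ξ, ‖𝓕 g ξ‖ ^ 2 = ∫ x, ‖g x‖ ^ 2 := by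
  set g' : V → ℂ := fun x ↦ conj (g (-x))
  have hg' : Continuous g' := continuous_conj.comp (hg.comp continuous_neg)
  have hg's : HasCompactSupport g' :=
    (hgs.comp_homeomorph (Homeomorph.neg V)).comp_left (map_zero conj)
  -- Fourier inversion at `0` for the autocorrelation `H`, whose Fourier transform is `‖𝓕 g‖²`.
  set H := g ⋆[ContinuousLinearMap.mul ℂ ℂ] g'
  have hH : Continuous H := hg's.continuous_convolution_right _ hg.locallyIntegrable hg'
  have hHi : Integrable H := hH.integrable_of_hasCompactSupport (hgs.convolution _ hg's)
  have hFH : 𝓕 H = fun ξ ↦ ((‖𝓕 g ξ‖ ^ 2 : ℝ) : ℂ) := by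
    ext ξ
    rw [fourier_mul_convolution_eq (hg.integrable_of_hasCompactSupport hgs)
      (hg'.integrable_of_hasCompactSupport hg's), fourier_conj_comp_neg, mul_conj']
    norm_cast
  have hH0 : H 0 = ∫ x, ((‖g x‖ ^ 2 : ℝ) : ℂ) := by
    simp only [H, g', convolution_def, ContinuousLinearMap.mul_apply', zero_sub, neg_neg, mul_conj']
    norm_cast
  have hinv := hHi.fourierInv_fourier_eq (hFH ▸ hFg.ofReal) hH.continuousAt (v := 0)
  rw [fourierInv_eq, hFH, hH0] at hinv
  simp only [inner_zero_right, AddChar.map_zero_eq_one, one_smul] at hinv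
  exact_mod_cast hinv

end Plancherel

theorem fourierCoeffOn_eq_fourier {g : ℝ → ℂ} {a b : ℝ} (hab : a < b)
    (hsupp : Function.support g ⊆ Ioc a b) (n : ℤ) :
    fourierCoeffOn hab g n = (b - a)⁻¹ • 𝓕 g (n / (b - a)) := by
  rw [fourierCoeffOn_eq_integral, one_div, intervalIntegral.integral_of_le hab.le,
    setIntegral_eq_integral_of_forall_compl_eq_zero, fourier_real_eq_integral_exp_smul]
  · congr 1
    refine integral_congr_ae (ae_of_all _ fun x ↦ ?_)
    simp only [fourier_coe_apply, smul_eq_mul]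
    congr 2
    push_cast
    ring
  · intro x hx
    rw [Function.notMem_support.mp (fun h ↦ hx (hsupp h)), smul_zero]

theorem hasSum_norm_fourier_sq_of_support_subset {g : ℝ → ℂ} {a b : ℝ} (hab : a < b)
    (hg : MemLp g 2) (hsupp : Function.support g ⊆ Ioc a b) :
    HasSum (fun n : ℤ ↦ ‖𝓕 g (n / (b - a))‖ ^ 2) ((b - a) * ∫ x, ‖g x‖ ^ 2) := by
  have hba : 0 < b - a := sub_pos.mpr hab
  have h := (hasSum_sq_fourierCoeffOn hab (hg.restrict _)).mul_left ((b - a) ^ 2)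
  simp only [fourierCoeffOn_eq_fourier hab hsupp, norm_smul, norm_inv, Real.norm_of_nonneg hba.le,
    mul_pow, ← mul_assoc, smul_eq_mul] at h
  rw [intervalIntegral.integral_of_le hab.le, setIntegral_eq_integral_of_forall_compl_eq_zero] at h
  · have hc : (b - a) ^ 2 * (b - a)⁻¹ ^ 2 = 1 := by field_simp
    have hc' : (b - a) ^ 2 * (b - a)⁻¹ = b - a := by field_simp
    simpa only [hc, hc', one_mul] using h
  · intro x hx
    simp [Function.notMem_support.mp (fun h ↦ hx (hsupp h))]

theorem eventually_riemannSum_norm_fourier_sq_eq {g : ℝ → ℂ} (hg : Continuous g)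
    (hgs : HasCompactSupport g) (hFg : Integrable fun ξ ↦ ‖𝓕 g ξ‖ ^ 2) :
    ∀ᶠ P in atTop, P⁻¹ * ∑' n : ℤ, ‖𝓕 g (n / P)‖ ^ 2 = ∫ ξ, ‖𝓕 g ξ‖ ^ 2 := by
  obtain ⟨R, hR⟩ := hgs.isCompact.isBounded.subset_closedBall 0
  filter_upwards [eventually_gt_atTop (2 * R), eventually_gt_atTop 0] with P hPR hP
  have hsupp : Function.support g ⊆ Ioc (-(P / 2)) (P / 2) := fun x hx ↦ by
    have := abs_le.mp (mem_closedBall_zero_iff.mp (hR (subset_tsupport g hx)))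
    constructor <;> linarith [this.1, this.2]
  have hsum := hasSum_norm_fourier_sq_of_support_subset (by linarith)
    (hg.memLp_of_hasCompactSupport hgs) hsupp
  rw [show P / 2 - -(P / 2) = P by ring] at hsum
  rw [hsum.tsum_eq, inv_mul_cancel_left₀ hP.ne', integral_norm_fourier_sq hg hgs hFg]

end Real

theorem fourierT_eq_fourier (f : ℝ → ℝ) (ω : ℝ) :
    fourierT f ω = ((2 * π)⁻¹ : ℝ) • 𝓕 (fun x ↦ (f x : ℂ)) (ω / (2 * π)) := by
  rw [fourierT, Real.fourier_real_eq_integral_exp_smul, Complex.real_smul]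
  push_cast
  rw [one_div]
  congr 2 with x
  rw [smul_eq_mul]
  congr 2
  field_simp

theorem norm_fourierT (f : ℝ → ℝ) (ω : ℝ) :
    ‖fourierT f ω‖ = (2 * π)⁻¹ * ‖𝓕 (fun x ↦ (f x : ℂ)) (ω / (2 * π))‖ := by
  rw [fourierT_eq_fourier, norm_smul, Real.norm_of_nonneg (by positivity)]

theorem continuous_fourierT {f : ℝ → ℝ} (hf : Integrable f) : Continuous (fourierT f) := by
  simp_rw [funext (fourierT_eq_fourier f)]
  have hF : Continuous (𝓕 fun x ↦ (f x : ℂ)) :=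
    VectorFourier.fourierIntegral_continuous Real.continuous_fourierChar
      (innerSL ℝ).continuous₂ (hf.ofReal (𝕜 := ℂ))
  exact (hF.comp (continuous_id.div_const _)).const_smul ((2 * π)⁻¹ : ℝ)

theorem eventually_riemannSum_norm_fourierT_sq_eq {f : ℝ → ℝ} (hf : Continuous f)
    (hfs : HasCompactSupport f) (hF : Integrable fun ξ ↦ ‖fourierT f ξ‖ ^ 2) :
    ∀ᶠ T in atTop, 1 / T * ∑' k : ℤ, ‖fourierT f (k / T)‖ ^ 2 = ∫ ξ, ‖fourierT f ξ‖ ^ 2 := by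
  set g : ℝ → ℂ := fun x ↦ (f x : ℂ)
  have hc : 0 < 2 * π := by positivity
  have hsq (ω : ℝ) : ‖fourierT f ω‖ ^ 2 = (2 * π)⁻¹ ^ 2 * ‖𝓕 g (ω / (2 * π))‖ ^ 2 := by
    rw [norm_fourierT, mul_pow]
  have hFg : Integrable fun ξ ↦ ‖𝓕 g ξ‖ ^ 2 := by
    refine ((hF.comp_mul_left' hc.ne').const_mul ((2 * π) ^ 2)).congr (ae_of_all _ fun ξ ↦ ?_)
    simp only [hsq, mul_div_cancel_left₀ _ hc.ne']
    field_simp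
  have hintegral : ∫ ξ, ‖fourierT f ξ‖ ^ 2 = (2 * π)⁻¹ * ∫ ξ, ‖𝓕 g ξ‖ ^ 2 := by
    simp only [hsq, integral_const_mul, Measure.integral_comp_div (fun ξ ↦ ‖𝓕 g ξ‖ ^ 2),
      abs_of_pos hc, smul_eq_mul]
    field_simp
  have hscale : Tendsto (fun T ↦ 2 * π * T) atTop atTop := tendsto_id.const_mul_atTop hc
  filter_upwards [hscale.eventually (Real.eventually_riemannSum_norm_fourier_sq_eq (g := g)
    (continuous_ofReal.comp hf) (hfs.comp_left ofReal_zero) hFg), eventually_gt_atTop 0]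
    with T hT hT0
  rw [hintegral, ← hT]
  simp only [hsq, div_div, mul_comm T, tsum_mul_left]
  field_simp

theorem stmt_4_general (f : ℝ → ℝ) (hf : Continuous f) (hsupp : HasCompactSupport f)
    (α : ℝ) (hα1 : α < 1)
    (hint : Integrable (fun ξ : ℝ => (‖fourierT f ξ‖)^2 * (1 + |ξ|))) :
    Tendsto (fun n : ℕ =>
        (1 / (n : ℝ) ^ (1 - α)) *
          ∑' k : ℤ, (‖fourierT f ((k : ℝ) / (n : ℝ) ^ (1 - α))‖) ^ 2)
      atTop (𝓝 (∫ ξ : ℝ, (‖fourierT f ξ‖) ^ 2)) := by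
  have hF : Integrable fun ξ ↦ ‖fourierT f ξ‖ ^ 2 := by
    refine hint.mono ((continuous_fourierT (hf.integrable_of_hasCompactSupport hsupp)).norm.pow
      2).aestronglyMeasurable (ae_of_all _ fun ξ ↦ ?_)
    simp only [norm_mul, norm_pow, norm_norm]
    exact le_mul_of_one_le_right (by positivity)
      ((le_add_of_nonneg_right (abs_nonneg ξ)).trans (le_abs_self _))
  have hscale : Tendsto (fun n : ℕ ↦ (n : ℝ) ^ (1 - α)) atTop atTop :=
    (tendsto_rpow_atTop (by linarith)).comp tendsto_natCast_atTop_atTop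
  refine tendsto_const_nhds.congr' ?_
  filter_upwards [hscale.eventually (eventually_riemannSum_norm_fourierT_sq_eq hf hsupp hF)]
    with n hn
  exact hn.symm

/-- Riemann sum convergence: `(1/n^{1-α}) ∑_{k ∈ ℤ} |F f(k/n^{1-α})|² → ∫ |F f(ξ)|² dξ`. -/
theorem stmt_4 (f : ℝ → ℝ) (hf : Continuous f) (hsupp : HasCompactSupport f)
    (hFc : Continuous (fourierT f)) (α : ℝ) (hα0 : 0 < α) (hα1 : α < 1)
    (hint : Integrable (fun ξ : ℝ => (‖fourierT f ξ‖)^2 * (1 + |ξ|))) :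
    Tendsto (fun n : ℕ =>
        (1 / (n : ℝ) ^ (1 - α)) *
          ∑' k : ℤ, (‖fourierT f ((k : ℝ) / (n : ℝ) ^ (1 - α))‖) ^ 2)
      atTop (𝓝 (∫ ξ : ℝ, (‖fourierT f ξ‖) ^ 2)) :=
  stmt_4_general f hf hsupp α hα1 hint
end

section
/- Let f : ℝ → ℝ be Hölder continuous with exponent δ ∈ (0,1), bounded, and supported in [-π,π]. Let λ_n → ∞. Then for θ with 2π ≤ |θ| ≤ Θ_n, | ∫_{-π}^{π} (f(ω)/(1 − ω/θ)) e^{i λ_n ω} dω | ≤ C λ_n^{−δ}, with constant C independent of θ and n. -/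
open MeasureTheory Real Complex Filter Topology

/-!
Since `exp (i L (x + π / L)) = - exp (i L x)`, translating by half a period negates
`∫ g(x) e^{iLx} dx`, so twice the integral equals `∫ (g(x) - g(x + π/L)) e^{iLx} dx`, an integral
over an interval of length `2π + π/L`. For `g(ω) = f(ω) / (1 - ω/θ)` with `|θ| ≥ 2π` the
denominator stays at least `1/4` in absolute value near `[-π, π]` and moves by at most `h / |θ|`
under a shift by `h`, so the Hölder bound on `f` gives `|g(x) - g(x + π/L)| ≲ (π/L)^δ`,
uniformly in `θ`.
-/

theorem continuous_of_dist_le_mul_rpow {X Y : Type*} [PseudoMetricSpace X] [PseudoMetricSpace Y]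
    {f : X → Y} {H r : ℝ} (hr : 0 < r) (hf : ∀ x y, dist (f x) (f y) ≤ H * dist x y ^ r) :
    Continuous f := by
  rw [continuous_iff_continuousAt]
  intro x
  rw [ContinuousAt, tendsto_iff_dist_tendsto_zero]
  refine squeeze_zero (fun _ => dist_nonneg) (fun y => hf y x) ?_
  have hcont : Continuous fun y => H * dist y x ^ r :=
    continuous_const.mul ((continuous_id.dist continuous_const).rpow_const fun _ => Or.inr hr.le)
  simpa [Real.zero_rpow hr.ne'] using hcont.tendsto x

theorem nonneg_of_abs_sub_le_mul_rpow {f : ℝ → ℝ} {H δ : ℝ}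
    (hH : ∀ x y : ℝ, |f x - f y| ≤ H * |x - y| ^ δ) : 0 ≤ H :=
  (abs_nonneg _).trans ((hH 0 1).trans_eq (by simp))

theorem div_rpow_le_mul_rpow_neg {c L δ : ℝ} (hc : 1 ≤ c) (hL : 0 ≤ L) (hδ : δ ≤ 1) :
    (c / L) ^ δ ≤ c * L ^ (-δ) := by
  rw [Real.div_rpow (by linarith) hL, Real.rpow_neg hL, div_eq_mul_inv]
  gcongr
  exact Real.rpow_le_self_of_one_le hc hδ

theorem div_le_mul_rpow_neg {c L δ : ℝ} (hc : 0 ≤ c) (hL : 1 ≤ L) (hδ : δ ≤ 1) :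
    c / L ≤ c * L ^ (-δ) := by
  rw [div_eq_mul_inv, ← Real.rpow_neg_one]
  gcongr

section HalfPeriodShift

theorem norm_cexp_I_mul (L x : ℝ) : ‖cexp (I * L * x)‖ = 1 := by
  rw [show I * L * x = ↑(L * x) * I by push_cast; ring, norm_exp_ofReal_mul_I]

theorem cexp_I_mul_add_pi_div {L : ℝ} (hL : L ≠ 0) (x : ℝ) :
    cexp (I * L * ↑(x + π / L)) = -cexp (I * L * x) := by
  have hL' : (L : ℂ) ≠ 0 := by exact_mod_cast hL
  have : I * L * ↑(x + π / L) = I * L * x + π * I := by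
    push_cast
    field_simp
  rw [this, Complex.exp_add, Complex.exp_pi_mul_I, mul_neg_one]

theorem integral_shift_mul_cexp {g : ℝ → ℂ} {L : ℝ} (hL : L ≠ 0) :
    ∫ x, g (x + π / L) * cexp (I * L * x) = -∫ x, g x * cexp (I * L * x) := by
  have hshift : ∀ x : ℝ, g (x + π / L) * cexp (I * L * x)
      = -(g (x + π / L) * cexp (I * L * ↑(x + π / L))) := by
    intro x
    rw [cexp_I_mul_add_pi_div hL, mul_neg, neg_neg]
  simp_rw [hshift]
  rw [integral_neg, integral_add_right_eq_self (fun x => g x * cexp (I * L * x))]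

theorem two_mul_integral_mul_cexp {g : ℝ → ℂ} {L : ℝ} (hL : L ≠ 0)
    (hg : Integrable fun x => g x * cexp (I * L * x)) :
    2 * ∫ x, g x * cexp (I * L * x) = ∫ x, (g x - g (x + π / L)) * cexp (I * L * x) := by
  have hg' : Integrable fun x => g (x + π / L) * cexp (I * L * x) := by
    refine (hg.comp_add_right (π / L)).neg.congr (.of_forall fun x => ?_)
    simp only [Pi.neg_apply, cexp_I_mul_add_pi_div hL, mul_neg, neg_neg]
  simp_rw [sub_mul]
  rw [integral_sub hg hg', integral_shift_mul_cexp hL]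
  ring

theorem norm_integral_mul_cexp_le {g : ℝ → ℂ} {L a b M : ℝ} (hL : 0 < L) (hab : a ≤ b)
    (hg : Integrable fun x => g x * cexp (I * L * x)) (hsupp : Function.support g ⊆ Set.Icc a b)
    (hM : ∀ x, ‖g x - g (x + π / L)‖ ≤ M) :
    ‖∫ x, g x * cexp (I * L * x)‖ ≤ M * (b - a + π / L) / 2 := by
  have hh : 0 < π / L := div_pos pi_pos hL
  have hD : ∀ x ∉ Set.Icc (a - π / L) b, (g x - g (x + π / L)) * cexp (I * L * x) = 0 := by
    intro x hx
    have h1 : g x = 0 := Function.notMem_support.1 fun h =>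
      hx ⟨by linarith [(hsupp h).1], (hsupp h).2⟩
    have h2 : g (x + π / L) = 0 := Function.notMem_support.1 fun h =>
      hx ⟨by linarith [(hsupp h).1], by linarith [(hsupp h).2]⟩
    rw [h1, h2, sub_zero, zero_mul]
  have hbound := norm_setIntegral_le_of_norm_le_const
    (measure_Icc_lt_top (μ := volume) (a := a - π / L) (b := b))
    fun x _ => (norm_mul_le_of_le (hM x) (norm_cexp_I_mul L x).le).trans_eq (mul_one M)
  rw [setIntegral_eq_integral_of_forall_compl_eq_zero hD, ← two_mul_integral_mul_cexp hL.ne' hg,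
    norm_mul, Complex.norm_two, Real.volume_real_Icc_of_le (by linarith)] at hbound
  linarith

end HalfPeriodShift

section HolderQuotient

theorem abs_div_sub_div_le (a b : ℝ) {c d : ℝ} (hc : c ≠ 0) (hd : d ≠ 0) :
    |a / c - b / d| ≤ |a - b| / |c| + |b| * |d - c| / (|c| * |d|) := by
  have : a / c - b / d = (a - b) / c + b * (d - c) / (c * d) := by
    field_simp
    ring
  rw [this, ← abs_mul, ← abs_mul, ← abs_div, ← abs_div]
  exact abs_add_le _ _

theorem le_abs_one_sub_div {x θ : ℝ} (hθ : 2 * π ≤ |θ|) (hx : |x| ≤ π + 1) :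
    1 / 4 ≤ |1 - x / θ| := by
  have hθ0 : 0 < |θ| := by linarith [pi_pos]
  have : |x / θ| ≤ 3 / 4 := by
    rw [abs_div, div_le_iff₀ hθ0]
    linarith [pi_gt_three]
  have := abs_sub_abs_le_abs_sub 1 (x / θ)
  rw [abs_one] at this
  linarith

theorem abs_div_one_sub_div_sub_shift_le {f : ℝ → ℝ} {H δ B θ h : ℝ}
    (hH : ∀ x y : ℝ, |f x - f y| ≤ H * |x - y| ^ δ) (hB : ∀ x, |f x| ≤ B)
    (hsupp : Function.support f ⊆ Set.Icc (-π) π) (hθ : 2 * π ≤ |θ|) (hh0 : 0 ≤ h) (hh1 : h ≤ 1)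
    (x : ℝ) :
    |f x / (1 - x / θ) - f (x + h) / (1 - (x + h) / θ)| ≤ 4 * H * h ^ δ + 3 * B * h := by
  have hH0 := nonneg_of_abs_sub_le_mul_rpow hH
  have hB0 : 0 ≤ B := (abs_nonneg _).trans (hB 0)
  by_cases hzero : f x = 0 ∧ f (x + h) = 0
  · simp only [hzero.1, hzero.2, zero_div, sub_zero, abs_zero]
    positivity
  have hx : |x| ≤ π + 1 ∧ |x + h| ≤ π + 1 := by
    rcases not_and_or.1 hzero with hfx | hfx <;>
    · obtain ⟨hlo, hhi⟩ := hsupp hfx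
      exact ⟨abs_le.2 ⟨by linarith, by linarith⟩, abs_le.2 ⟨by linarith, by linarith⟩⟩
  have hc := le_abs_one_sub_div hθ hx.1
  have hd := le_abs_one_sub_div hθ hx.2
  have hθ0 : 0 < |θ| := by linarith [pi_pos]
  have hholder : |f x - f (x + h)| ≤ H * h ^ δ := by
    simpa [abs_of_nonneg hh0] using hH x (x + h)
  have hdiff : |(1 - (x + h) / θ) - (1 - x / θ)| ≤ h / (2 * π) := by
    rw [show (1 - (x + h) / θ) - (1 - x / θ) = -(h / θ) by ring, abs_neg, abs_div,
      abs_of_nonneg hh0]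
    gcongr
  calc _ ≤ |f x - f (x + h)| / |1 - x / θ|
          + |f (x + h)| * |(1 - (x + h) / θ) - (1 - x / θ)| / (|1 - x / θ| * |1 - (x + h) / θ|) :=
        abs_div_sub_div_le _ _ (abs_pos.1 (by linarith)) (abs_pos.1 (by linarith))
    _ ≤ H * h ^ δ / (1 / 4) + B * (h / (2 * π)) / (1 / 4 * (1 / 4)) := by
        gcongr
        exact hB _
    _ = 4 * H * h ^ δ + 8 / π * (B * h) := by
        field_simp
        ring
    _ ≤ 4 * H * h ^ δ + 3 * B * h := by
        have : 8 / π ≤ 3 := by rw [div_le_iff₀ pi_pos]; linarith [pi_gt_three]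
        have := mul_le_mul_of_nonneg_right this (mul_nonneg hB0 hh0)
        linarith

theorem integrable_div_one_sub_div_mul_cexp {f : ℝ → ℝ} {θ : ℝ} (hf : Continuous f)
    (hsupp : Function.support f ⊆ Set.Icc (-π) π) (hθ : 2 * π ≤ |θ|) (L : ℝ) :
    Integrable fun x => ((f x / (1 - x / θ) : ℝ) : ℂ) * cexp (I * L * x) := by
  have hden : ∀ x ∈ Set.Icc (-π) π, 1 - x / θ ≠ 0 := fun x hx =>
    abs_pos.1 ((le_abs_one_sub_div hθ (abs_le.2 ⟨by linarith [hx.1], by linarith [hx.2]⟩)).trans_lt'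
      (by norm_num))
  have hcont : ContinuousOn (fun x => ((f x / (1 - x / θ) : ℝ) : ℂ) * cexp (I * L * x))
      (Set.Icc (-π) π) :=
    (continuous_ofReal.comp_continuousOn (hf.continuousOn.div (by fun_prop) hden)).mul
      (by fun_prop)
  refine (integrableOn_iff_integrable_of_support_subset fun x hx => hsupp fun hfx => ?_).1
    hcont.integrableOn_Icc
  simp [hfx] at hx

theorem norm_setIntegral_div_one_sub_div_mul_cexp_le {f : ℝ → ℝ} {H δ B θ L : ℝ}
    (hf : Continuous f) (hH : ∀ x y : ℝ, |f x - f y| ≤ H * |x - y| ^ δ) (hB : ∀ x, |f x| ≤ B)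
    (hsupp : Function.support f ⊆ Set.Icc (-π) π) (hθ : 2 * π ≤ |θ|) (hL : π ≤ L) :
    ‖∫ ω in Set.Icc (-π) π, (f ω : ℂ) / (1 - ω / θ) * cexp (I * L * ω)‖
      ≤ (4 * H * (π / L) ^ δ + 3 * B * (π / L)) * (2 * π + π / L) / 2 := by
  have hL0 : 0 < L := pi_pos.trans_le hL
  have hq_supp : Function.support (fun x => ((f x / (1 - x / θ) : ℝ) : ℂ)) ⊆ Set.Icc (-π) π :=
    fun x hx => hsupp fun hfx => hx (by simp [hfx])
  have hshift : ∀ x, ‖((f x / (1 - x / θ) : ℝ) : ℂ)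
      - ((f (x + π / L) / (1 - (x + π / L) / θ) : ℝ) : ℂ)‖
      ≤ 4 * H * (π / L) ^ δ + 3 * B * (π / L) := by
    intro x
    rw [← ofReal_sub, norm_real, Real.norm_eq_abs]
    exact abs_div_one_sub_div_sub_shift_le hH hB hsupp hθ (by positivity)
      ((div_le_one hL0).2 hL) x
  rw [setIntegral_eq_integral_of_forall_compl_eq_zero fun x hx => by
    simp [Function.notMem_support.1 fun h => hx (hsupp h)]]
  convert norm_integral_mul_cexp_le hL0 (by linarith [pi_pos])
    (integrable_div_one_sub_div_mul_cexp hf hsupp hθ L) hq_supp hshift using 3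
  · push_cast
    rfl
  · ring

end HolderQuotient

/-- Quantitative Riemann–Lebesgue for Hölder functions: if `f` is `δ`-Hölder, bounded and
supported in `[-π,π]`, and `λ_n → ∞`, then for `2π ≤ |θ| ≤ Θ_n`,
`|∫_{-π}^{π} (f(ω)/(1 − ω/θ)) e^{i λ_n ω} dω| ≤ C λ_n^{−δ}` with `C` independent of `θ, n`. -/
theorem stmt_17 (f : ℝ → ℝ) (δ : ℝ) (hδ0 : 0 < δ) (hδ1 : δ < 1)
    (H : ℝ) (hH : ∀ x y : ℝ, |f x - f y| ≤ H * |x - y| ^ δ)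
    (B : ℝ) (hB : ∀ x, |f x| ≤ B)
    (hsupp : Function.support f ⊆ Set.Icc (-Real.pi) Real.pi)
    (lam : ℕ → ℝ) (hlam : Tendsto lam atTop atTop) (Θ : ℕ → ℝ) :
    ∃ C : ℝ, 0 < C ∧ ∀ᶠ n : ℕ in atTop, ∀ θ : ℝ,
      2 * Real.pi ≤ |θ| → |θ| ≤ Θ n →
      ‖(∫ ω in Set.Icc (-Real.pi) Real.pi,
          ((f ω : ℂ) / (1 - ω / θ)) * Complex.exp (Complex.I * lam n * ω))‖
        ≤ C * lam n ^ (-δ) := by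
  have hH0 := nonneg_of_abs_sub_le_mul_rpow hH
  have hB0 : 0 ≤ B := (abs_nonneg _).trans (hB 0)
  have hf : Continuous f := continuous_of_dist_le_mul_rpow hδ0 hH
  refine ⟨3 * π ^ 2 * (4 * H + 3 * B) / 2 + 1, by positivity, ?_⟩
  filter_upwards [hlam.eventually_ge_atTop π] with n hL θ hθ _
  have hL1 : 1 ≤ lam n := by linarith [pi_gt_three]
  have hπL : π / lam n ≤ π := div_le_self pi_pos.le hL1
  calc _ ≤ (4 * H * (π / lam n) ^ δ + 3 * B * (π / lam n)) * (2 * π + π / lam n) / 2 :=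
        norm_setIntegral_div_one_sub_div_mul_cexp_le hf hH hB hsupp hθ hL
    _ ≤ (4 * H * (π * lam n ^ (-δ)) + 3 * B * (π * lam n ^ (-δ))) * (2 * π + π) / 2 := by
        gcongr
        · exact div_rpow_le_mul_rpow_neg (by linarith [pi_gt_three]) (by linarith) hδ1.le
        · exact div_le_mul_rpow_neg pi_pos.le hL1 hδ1.le
    _ = 3 * π ^ 2 * (4 * H + 3 * B) / 2 * lam n ^ (-δ) := by ring
    _ ≤ (3 * π ^ 2 * (4 * H + 3 * B) / 2 + 1) * lam n ^ (-δ) := by gcongr; linarith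
end
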